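/- arXiv:1001.1459 — 4 statements merged into one kernel-verified Lean document; each statement's English description precedes it below -/
import Mathlib

section
/- Let R, S be rings, A, B unital subrings of R, X an invertible A-B-submodule of R, and M, N two R-S-bimodules. For every map f : M → N that is simultaneously left B-linear (on the unital submodules BM, BN) and right S-linear, there exists a unique map f^X : AM → AN that is left A-linear and right S-linear and satisfies f^X(x m) = x f(1_B m) for all x in X and m in M. -/
open Pointwise

/-- `A` is a unital subring of the (possibly non-unital) ring `R`, with identity element
`oneA` (not necessarily an identity of `R`). -/
structure IsUnitalSubring {R : Type*} [NonUnitalRing R] (A : AddSubgroup R) (oneA : R) : Prop where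
  one_mem : oneA ∈ A
  mul_mem : ∀ ⦃a⦄, a ∈ A → ∀ ⦃b⦄, b ∈ A → a * b ∈ A
  one_mul : ∀ a ∈ A, oneA * a = a
  mul_one : ∀ a ∈ A, a * oneA = a

/-- `X` is an invertible (unital) `A`-`B`-submodule of `R` with inverse `Xinv`:
`X Xinv = A` and `Xinv X = B`, where products denote the additive subgroup generated by
all products (i.e. finite sums of products). -/
structure IsInvertibleSubmodule {R : Type*} [NonUnitalRing R]
    (A B : AddSubgroup R) (oneA oneB : R) (X Xinv : AddSubgroup R) : Prop where
  unitalA : IsUnitalSubring A oneA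
  unitalB : IsUnitalSubring B oneB
  smul_mem : ∀ ⦃a⦄, a ∈ A → ∀ ⦃x⦄, x ∈ X → a * x ∈ X
  mem_smul : ∀ ⦃x⦄, x ∈ X → ∀ ⦃b⦄, b ∈ B → x * b ∈ X
  one_smul : ∀ x ∈ X, oneA * x = x
  smul_one : ∀ x ∈ X, x * oneB = x
  smul_mem' : ∀ ⦃b⦄, b ∈ B → ∀ ⦃y⦄, y ∈ Xinv → b * y ∈ Xinv
  mem_smul' : ∀ ⦃y⦄, y ∈ Xinv → ∀ ⦃a⦄, a ∈ A → y * a ∈ Xinv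
  one_smul' : ∀ y ∈ Xinv, oneB * y = y
  smul_one' : ∀ y ∈ Xinv, y * oneA = y
  mul_inv : X * Xinv = A
  inv_mul : Xinv * X = B

/-- The ring structure on a unital subring of `R`. -/
def IsUnitalSubring.ring {R : Type*} [NonUnitalRing R] {A : AddSubgroup R} {oneA : R}
    (h : IsUnitalSubring A oneA) : Ring A :=
  { (inferInstance : AddCommGroup A) with
    mul := fun a b => ⟨a.1 * b.1, h.mul_mem a.2 b.2⟩
    one := ⟨oneA, h.one_mem⟩
    mul_assoc := fun a b c => Subtype.ext (mul_assoc a.1 b.1 c.1)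
    one_mul := fun a => Subtype.ext (h.one_mul a.1 a.2)
    mul_one := fun a => Subtype.ext (h.mul_one a.1 a.2)
    left_distrib := fun a b c => Subtype.ext (mul_add a.1 b.1 c.1)
    right_distrib := fun a b c => Subtype.ext (add_mul a.1 b.1 c.1)
    zero_mul := fun a => Subtype.ext (zero_mul a.1)
    mul_zero := fun a => Subtype.ext (mul_zero a.1) }


/-- `M` is an `R`-`S`-bimodule via the left action `ρ` and the right action `τ`. -/
structure IsBimodule (R S M : Type*) [NonUnitalRing R] [NonUnitalRing S] [AddCommGroup M]
    (ρ : R → M → M) (τ : M → S → M) : Prop where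
  add_smul : ∀ r r' m, ρ (r + r') m = ρ r m + ρ r' m
  smul_add : ∀ r m m', ρ r (m + m') = ρ r m + ρ r m'
  mul_smul : ∀ r r' m, ρ (r * r') m = ρ r (ρ r' m)
  smul_add' : ∀ m m' s, τ (m + m') s = τ m s + τ m' s
  add_smul' : ∀ m s s', τ m (s + s') = τ m s + τ m s'
  smul_mul' : ∀ m s s', τ m (s * s') = τ (τ m s) s'
  smul_comm : ∀ r m s, τ (ρ r m) s = ρ r (τ m s)

/-- For a subring `A` of `R`, the sub-bimodule `AM` of `M`: the additive subgroup generated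
by all products `a • m` with `a ∈ A`, `m ∈ M`. -/
def actSpan {R M : Type*} [NonUnitalRing R] [AddCommGroup M]
    (ρ : R → M → M) (A : AddSubgroup R) : AddSubgroup M :=
  AddSubgroup.closure {x | ∃ a ∈ A, ∃ m : M, x = ρ a m}

/-- `f` belongs to `Hom_{B,S}(BM, BN)`: it maps `BM` to `BN` and is left `B`-linear and
right `S`-linear there. -/
def IsHomBS {R S M N : Type*} [NonUnitalRing R] [NonUnitalRing S]
    [AddCommGroup M] [AddCommGroup N]
    (B : AddSubgroup R) (ρM : R → M → M) (τM : M → S → M)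
    (ρN : R → N → N) (τN : N → S → N) (f : M → N) : Prop :=
  (∀ m ∈ actSpan ρM B, f m ∈ actSpan ρN B) ∧
  (∀ m ∈ actSpan ρM B, ∀ m' ∈ actSpan ρM B, f (m + m') = f m + f m') ∧
  (∀ b ∈ B, ∀ m ∈ actSpan ρM B, f (ρM b m) = ρN b (f m)) ∧
  (∀ m ∈ actSpan ρM B, ∀ s : S, f (τM m s) = τN (f m) s)

/-- `g` is the map `f^X ∈ Hom_{A,S}(AM, AN)` induced by `f ∈ Hom_{B,S}(BM, BN)` along the
invertible `A`-`B`-submodule `X`, i.e. it is left `A`-linear and right `S`-linear on `AM` and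
satisfies `g (x • m) = x • f (1_B • m)` for all `x ∈ X`, `m ∈ M`. -/
def IsInducedMap {R S M N : Type*} [NonUnitalRing R] [NonUnitalRing S]
    [AddCommGroup M] [AddCommGroup N]
    (A : AddSubgroup R) (oneB : R) (X : AddSubgroup R)
    (ρM : R → M → M) (τM : M → S → M)
    (ρN : R → N → N) (τN : N → S → N) (f g : M → N) : Prop :=
  (∀ m ∈ actSpan ρM A, g m ∈ actSpan ρN A) ∧
  (∀ m ∈ actSpan ρM A, ∀ m' ∈ actSpan ρM A, g (m + m') = g m + g m') ∧
  (∀ a ∈ A, ∀ m ∈ actSpan ρM A, g (ρM a m) = ρN a (g m)) ∧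
  (∀ m ∈ actSpan ρM A, ∀ s : S, g (τM m s) = τN (g m) s) ∧
  (∀ x ∈ X, ∀ m : M, g (ρM x m) = ρN x (f (ρM oneB m)))

/-!
Write `1_A = ∑ i, x i * y i` with `x i ∈ X` and `y i ∈ X⁻¹`, and put
`f^X m = ∑ i, x i • f (y i • m)`. Since `y i * x ∈ X⁻¹ X = B`, left `B`-linearity of `f` gives
`f^X (x • m) = x • f (1_B • m)` for `x ∈ X`, and dually `y • f^X m = f (y • m)` for `y ∈ X⁻¹`;
together these make `f^X` linear over `A = X X⁻¹`. Uniqueness holds because `AM = XM` is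
generated by the elements `x • m`, on which `f^X` is prescribed.
-/

open Finset

theorem AddSubgroup.exists_fin_sum_mul_eq_of_mem_mul {R : Type*} [NonUnitalNonAssocRing R]
    {X Y : AddSubgroup R} {r : R} (hr : r ∈ X * Y) :
    ∃ (n : ℕ) (x y : Fin n → R),
      (∀ i, x i ∈ X) ∧ (∀ i, y i ∈ Y) ∧ ∑ i, x i * y i = r := by
  refine AddSubmonoid.mul_induction_on (M := X.toAddSubmonoid) (N := Y.toAddSubmonoid) hr
    ?_ ?_
  · intro a ha b hb
    exact ⟨1, fun _ => a, fun _ => b, fun _ => ha, fun _ => hb, by simp⟩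
  · rintro _ _ ⟨n₁, x₁, y₁, hx₁, hy₁, rfl⟩ ⟨n₂, x₂, y₂, hx₂, hy₂, rfl⟩
    refine ⟨n₁ + n₂, Fin.append x₁ x₂, Fin.append y₁ y₂, Fin.addCases (by simpa) (by simpa),
      Fin.addCases (by simpa) (by simpa), ?_⟩
    simp [Fin.sum_univ_add]

section AdditiveOn

variable {M N : Type*} [AddCommGroup M] [AddCommGroup N]

def AdditiveOn (H : AddSubgroup M) (g : M → N) : Prop :=
  ∀ m ∈ H, ∀ m' ∈ H, g (m + m') = g m + g m'

variable {H : AddSubgroup M} {g g' : M → N}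

theorem AdditiveOn.map_zero (hg : AdditiveOn H g) : g 0 = 0 := by
  simpa using hg 0 H.zero_mem 0 H.zero_mem

theorem AdditiveOn.map_neg (hg : AdditiveOn H g) {m : M} (hm : m ∈ H) : g (-m) = -g m :=
  eq_neg_of_add_eq_zero_left <| by
    rw [← hg _ (H.neg_mem hm) _ hm, neg_add_cancel, hg.map_zero]

theorem AdditiveOn.map_sum (hg : AdditiveOn H g) {ι : Type*} (s : Finset ι) {v : ι → M}
    (hv : ∀ i ∈ s, v i ∈ H) : g (∑ i ∈ s, v i) = ∑ i ∈ s, g (v i) := by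
  classical
  induction s using Finset.induction_on with
  | empty => simpa using hg.map_zero
  | insert i s hi ih =>
    have hvs : ∀ j ∈ s, v j ∈ H := fun j hj => hv j (mem_insert_of_mem hj)
    rw [sum_insert hi, sum_insert hi, hg _ (hv i (mem_insert_self i s)) _ (sum_mem hvs),
      ih hvs]

theorem AdditiveOn.eqOn_closure {s : Set M} (hg : AdditiveOn (.closure s) g)
    (hg' : AdditiveOn (.closure s) g') (h : Set.EqOn g g' s) :
    Set.EqOn g g' (AddSubgroup.closure s) := by
  intro m hm
  induction hm using AddSubgroup.closure_induction with
  | mem m hm => exact h hm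
  | zero => rw [hg.map_zero, hg'.map_zero]
  | add m m' hm hm' ih ih' => rw [hg _ hm _ hm', hg' _ hm _ hm', ih, ih']
  | neg m hm ih => rw [hg.map_neg hm, hg'.map_neg hm, ih]

end AdditiveOn

section Bimodule

variable {R S M : Type*} [NonUnitalRing R] [NonUnitalRing S] [AddCommGroup M]
  {ρ : R → M → M} {τ : M → S → M}

theorem smul_mem_actSpan {A : AddSubgroup R} {a : R} (ha : a ∈ A) (m : M) :
    ρ a m ∈ actSpan ρ A :=
  AddSubgroup.subset_closure ⟨a, ha, m, rfl⟩

namespace IsBimodule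

variable (h : IsBimodule R S M ρ τ)
include h

theorem smul_sum (r : R) {ι : Type*} (s : Finset ι) (v : ι → M) :
    ρ r (∑ i ∈ s, v i) = ∑ i ∈ s, ρ r (v i) :=
  map_sum (AddMonoidHom.mk' (ρ r) (h.smul_add r)) v s

theorem sum_smul {ι : Type*} (s : Finset ι) (c : ι → R) (m : M) :
    ρ (∑ i ∈ s, c i) m = ∑ i ∈ s, ρ (c i) m :=
  map_sum (AddMonoidHom.mk' (ρ · m) (h.add_smul · · m)) c s

theorem smul_sum' {ι : Type*} (s : Finset ι) (v : ι → M) (t : S) :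
    τ (∑ i ∈ s, v i) t = ∑ i ∈ s, τ (v i) t :=
  map_sum (AddMonoidHom.mk' (τ · t) (h.smul_add' · · t)) v s

theorem smul_mem_actSpan_of_mul_eq {A : AddSubgroup R} {e y : R} (he : e ∈ A) (hey : e * y = y)
    (m : M) : ρ y m ∈ actSpan ρ A := by
  rw [← hey, h.mul_smul]
  exact smul_mem_actSpan he _

theorem actSpan_mul_le (X Y : AddSubgroup R) : actSpan ρ (X * Y) ≤ actSpan ρ X := by
  refine AddSubgroup.closure_le _ |>.mpr ?_
  rintro _ ⟨a, ha, m, rfl⟩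
  refine AddSubmonoid.mul_induction_on (M := X.toAddSubmonoid) (N := Y.toAddSubmonoid)
    (C := fun a => ρ a m ∈ actSpan ρ X) ha ?_ ?_
  · intro x hx y _
    rw [h.mul_smul]
    exact smul_mem_actSpan hx _
  · intro a b ha hb
    rw [h.add_smul]
    exact add_mem ha hb

end IsBimodule

end Bimodule

section InducedMap

variable {R S M N : Type*} [NonUnitalRing R] [NonUnitalRing S] [AddCommGroup M] [AddCommGroup N]
  {A B X Xinv : AddSubgroup R} {oneA oneB : R}
  {ρM : R → M → M} {τM : M → S → M} {ρN : R → N → N} {τN : N → S → N}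

namespace IsInvertibleSubmodule

variable (hX : IsInvertibleSubmodule A B oneA oneB X Xinv)
include hX

theorem inv_mul_mem {x y : R} (hy : y ∈ Xinv) (hx : x ∈ X) : y * x ∈ B :=
  hX.inv_mul ▸
    AddSubmonoid.mul_mem_mul (M := Xinv.toAddSubmonoid) (N := X.toAddSubmonoid) hy hx

theorem exists_fin_sum_mul_eq_one :
    ∃ (n : ℕ) (x y : Fin n → R), (∀ i, x i ∈ X) ∧ (∀ i, y i ∈ Xinv) ∧ ∑ i, x i * y i = oneA :=
  AddSubgroup.exists_fin_sum_mul_eq_of_mem_mul (hX.mul_inv ▸ hX.unitalA.one_mem)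

theorem smul_mem_actSpan_of_mem (hM : IsBimodule R S M ρM τM) {x : R} (hx : x ∈ X) (m : M) :
    ρM x m ∈ actSpan ρM A :=
  hM.smul_mem_actSpan_of_mul_eq hX.unitalA.one_mem (hX.one_smul x hx) m

theorem smul_mem_actSpan_of_mem_inv (hM : IsBimodule R S M ρM τM) {y : R} (hy : y ∈ Xinv)
    (m : M) :
    ρM y m ∈ actSpan ρM B :=
  hM.smul_mem_actSpan_of_mul_eq hX.unitalB.one_mem (hX.one_smul' y hy) m

theorem actSpan_eq (hM : IsBimodule R S M ρM τM) : actSpan ρM A = actSpan ρM X := by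
  refine le_antisymm (hX.mul_inv ▸ hM.actSpan_mul_le X Xinv) (AddSubgroup.closure_le _ |>.mpr ?_)
  rintro _ ⟨x, hx, m, rfl⟩
  exact hX.smul_mem_actSpan_of_mem hM hx m

end IsInvertibleSubmodule

theorem IsInducedMap.eqOn (hX : IsInvertibleSubmodule A B oneA oneB X Xinv)
    (hM : IsBimodule R S M ρM τM) {f g g' : M → N} (hg : IsInducedMap A oneB X ρM τM ρN τN f g)
    (hg' : IsInducedMap A oneB X ρM τM ρN τN f g') : Set.EqOn g g' (actSpan ρM A) := by
  have hadd : AdditiveOn (actSpan ρM X) g := hX.actSpan_eq hM ▸ hg.2.1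
  have hadd' : AdditiveOn (actSpan ρM X) g' := hX.actSpan_eq hM ▸ hg'.2.1
  rw [hX.actSpan_eq hM]
  refine hadd.eqOn_closure hadd' ?_
  rintro _ ⟨x, hx, m, rfl⟩
  rw [hg.2.2.2.2 x hx, hg'.2.2.2.2 x hx]

theorem IsHomBS.map_smul_eq {f : M → N} (hf : IsHomBS B ρM τM ρN τN f)
    (hB : IsUnitalSubring B oneB) (hM : IsBimodule R S M ρM τM) {b : R} (hb : b ∈ B) (m : M) :
    f (ρM b m) = ρN b (f (ρM oneB m)) := by
  conv_lhs => rw [← hB.mul_one b hb, hM.mul_smul]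
  exact hf.2.2.1 b hb _ (smul_mem_actSpan hB.one_mem m)

def inducedMap (ρM : R → M → M) (ρN : R → N → N) (f : M → N) {n : ℕ} (x y : Fin n → R)
    (m : M) : N :=
  ∑ i, ρN (x i) (f (ρM (y i) m))

section InducedMapProperties

variable (hX : IsInvertibleSubmodule A B oneA oneB X Xinv) (hM : IsBimodule R S M ρM τM)
  (hN : IsBimodule R S N ρN τN) {f : M → N} (hf : IsHomBS B ρM τM ρN τN f)
  {n : ℕ} {x y : Fin n → R} (hx : ∀ i, x i ∈ X) (hy : ∀ i, y i ∈ Xinv)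
  (hxy : ∑ i, x i * y i = oneA)
include hX hM hN hf hy

theorem inducedMap_add (m m' : M) :
    inducedMap ρM ρN f x y (m + m') = inducedMap ρM ρN f x y m + inducedMap ρM ρN f x y m' := by
  rw [inducedMap, inducedMap, inducedMap, ← sum_add_distrib]
  refine sum_congr rfl fun i _ => ?_
  rw [hM.smul_add, hf.2.1 _ (hX.smul_mem_actSpan_of_mem_inv hM (hy i) m) _
    (hX.smul_mem_actSpan_of_mem_inv hM (hy i) m'), hN.smul_add]

theorem inducedMap_smul' (m : M) (t : S) :
    inducedMap ρM ρN f x y (τM m t) = τN (inducedMap ρM ρN f x y m) t := by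
  rw [inducedMap, inducedMap, hN.smul_sum']
  refine sum_congr rfl fun i _ => ?_
  rw [← hM.smul_comm, hf.2.2.2 _ (hX.smul_mem_actSpan_of_mem_inv hM (hy i) m), hN.smul_comm]

include hxy

theorem inducedMap_smul_of_mem {x' : R} (hx' : x' ∈ X) (m : M) :
    inducedMap ρM ρN f x y (ρM x' m) = ρN x' (f (ρM oneB m)) := by
  calc inducedMap ρM ρN f x y (ρM x' m)
      = ∑ i, ρN (x i * y i * x') (f (ρM oneB m)) := by
        refine sum_congr rfl fun i _ => ?_
        rw [← hM.mul_smul, hf.map_smul_eq hX.unitalB hM (hX.inv_mul_mem (hy i) hx'),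
          ← hN.mul_smul, mul_assoc]
    _ = ρN x' (f (ρM oneB m)) := by
        rw [← hN.sum_smul, ← sum_mul, hxy, hX.one_smul x' hx']

include hx

theorem smul_inducedMap_of_mem_inv {y' : R} (hy' : y' ∈ Xinv) (m : M) :
    ρN y' (inducedMap ρM ρN f x y m) = f (ρM y' m) := by
  have hyx : ∀ i, y' * x i ∈ B := fun i => hX.inv_mul_mem hy' (hx i)
  calc ρN y' (inducedMap ρM ρN f x y m)
      = ∑ i, f (ρM (y' * x i) (ρM (y i) m)) := by
        rw [inducedMap, hN.smul_sum]
        refine sum_congr rfl fun i _ => ?_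
        rw [← hN.mul_smul, hf.2.2.1 _ (hyx i) _ (hX.smul_mem_actSpan_of_mem_inv hM (hy i) m)]
    _ = f (ρM (y' * ∑ i, x i * y i) m) := by
        rw [← AdditiveOn.map_sum hf.2.1 _ fun i _ => smul_mem_actSpan (hyx i) _, mul_sum,
          hM.sum_smul]
        simp only [hM.mul_smul]
    _ = f (ρM y' m) := by rw [hxy, hX.smul_one' y' hy']

theorem inducedMap_smul {a : R} (ha : a ∈ A) (m : M) :
    inducedMap ρM ρN f x y (ρM a m) = ρN a (inducedMap ρM ρN f x y m) := by
  rw [← hX.mul_inv] at ha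
  refine AddSubmonoid.mul_induction_on (M := X.toAddSubmonoid) (N := Xinv.toAddSubmonoid)
    (C := fun a => ∀ m, inducedMap ρM ρN f x y (ρM a m) = ρN a (inducedMap ρM ρN f x y m))
    ha ?_ ?_ m
  · intro x' hx' y' hy' m
    rw [hM.mul_smul, inducedMap_smul_of_mem hX hM hN hf hy hxy hx', ← hM.mul_smul,
      hX.one_smul' y' hy', ← smul_inducedMap_of_mem_inv hX hM hN hf hx hy hxy hy', hN.mul_smul]
  · intro a a' ih ih' m
    rw [hM.add_smul, inducedMap_add hX hM hN hf hy, ih, ih', hN.add_smul]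

end InducedMapProperties

theorem IsInvertibleSubmodule.exists_isInducedMap
    (hX : IsInvertibleSubmodule A B oneA oneB X Xinv) (hM : IsBimodule R S M ρM τM)
    (hN : IsBimodule R S N ρN τN) {f : M → N} (hf : IsHomBS B ρM τM ρN τN f) :
    ∃ g, IsInducedMap A oneB X ρM τM ρN τN f g := by
  obtain ⟨n, x, y, hx, hy, hxy⟩ := hX.exists_fin_sum_mul_eq_one
  exact ⟨inducedMap ρM ρN f x y,
    fun m _ => sum_mem fun i _ => hX.smul_mem_actSpan_of_mem hN (hx i) _,
    fun m _ m' _ => inducedMap_add hX hM hN hf hy m m',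
    fun a ha m _ => inducedMap_smul hX hM hN hf hx hy hxy ha m,
    fun m _ t => inducedMap_smul' hX hM hN hf hy m t,
    fun x' hx' m => inducedMap_smul_of_mem hX hM hN hf hy hxy hx' m⟩

end InducedMap

/-- For every `f ∈ Hom_{B,S}(BM, BN)` there is a unique induced map
`f^X ∈ Hom_{A,S}(AM, AN)` with `f^X (x m) = x f (1_B m)` for all `x ∈ X`, `m ∈ M`. -/
theorem exists_unique_inducedMap {R S M N : Type*} [NonUnitalRing R] [NonUnitalRing S]
    [AddCommGroup M] [AddCommGroup N]
    (A B : AddSubgroup R) (oneA oneB : R) (X Xinv : AddSubgroup R)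
    (hX : IsInvertibleSubmodule A B oneA oneB X Xinv)
    (ρM : R → M → M) (τM : M → S → M) (ρN : R → N → N) (τN : N → S → N)
    (hM : IsBimodule R S M ρM τM) (hN : IsBimodule R S N ρN τN)
    (f : M → N) (hf : IsHomBS B ρM τM ρN τN f) :
    ∃ g : M → N, IsInducedMap A oneB X ρM τM ρN τN f g ∧
      ∀ g' : M → N, IsInducedMap A oneB X ρM τM ρN τN f g' →
        Set.EqOn g' g (actSpan ρM A) := by
  obtain ⟨g, hg⟩ := hX.exists_isInducedMap hM hN hf
  exact ⟨g, hg, fun g' hg' => hg'.eqOn hX hM hg⟩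
end

section
/- Let R be a locally unital ring graded by a category G, and let s in G be an isomorphism. Then R_s R_{s⁻¹} = R_{c(s)} if and only if R_s R_t = R_{st} for all t in G with d(s) = c(t). -/
open Pointwise CategoryTheory

/-- A locally unital ring `R` graded by a small category `G` (with object type `Obj`):
`R = ⊕_{s ∈ mor(G)} R_s`, `R_s R_t ⊆ R_{st}` for composable pairs, `R_s R_t = 0` for
non-composable pairs, and each identity component `R_e` is a unital ring, every `R_s` being
a unital `R_{c(s)}`-`R_{d(s)}`-bimodule. -/
structure CatGradedRing (Obj : Type*) [Category Obj] (R : Type*) [NonUnitalRing R] where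
  /-- the homogeneous component `R_s` -/
  deg : ∀ {e f : Obj}, (e ⟶ f) → AddSubgroup R
  /-- `R` is the internal direct sum of the components -/
  isInternal :
    letI := Classical.decEq (Σ e f : Obj, e ⟶ f)
    DirectSum.IsInternal (fun s : Σ e f : Obj, e ⟶ f => deg s.2.2)
  /-- `R_s R_t ⊆ R_{st}` whenever `d(s) = c(t)` -/
  mul_le : ∀ {e f g : Obj} (s : f ⟶ g) (t : e ⟶ f), deg s * deg t ≤ deg (t ≫ s)
  /-- `R_s R_t = 0` for non-composable pairs -/
  mul_eq_bot : ∀ {e f x y : Obj} (s : e ⟶ f) (t : x ⟶ y), y ≠ e → deg s * deg t = ⊥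
  /-- the local unit `1_{R_e}` -/
  unit : Obj → R
  unit_mem : ∀ e : Obj, unit e ∈ deg (𝟙 e)
  unit_mul : ∀ {e f : Obj} (s : e ⟶ f), ∀ x ∈ deg s, unit f * x = x
  mul_unit : ∀ {e f : Obj} (s : e ⟶ f), ∀ x ∈ deg s, x * unit e = x

/-- The grading is strong: `R_s R_t = R_{st}` for all composable pairs. -/
def CatGradedRing.IsStrong {Obj : Type*} [Category Obj] {R : Type*} [NonUnitalRing R]
    (g : CatGradedRing Obj R) : Prop :=
  ∀ {e f h : Obj} (s : f ⟶ h) (t : e ⟶ f), g.deg s * g.deg t = g.deg (t ≫ s)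

namespace AddSubgroup

theorem mul_mem_mul {R : Type*} [NonUnitalNonAssocRing R] {M N : AddSubgroup R} {m n : R}
    (hm : m ∈ M) (hn : n ∈ N) : m * n ∈ M * N :=
  AddSubmonoid.mul_mem_mul hm hn

theorem mul_le_mul_right {R : Type*} [NonUnitalNonAssocRing R] {N P : AddSubgroup R}
    (h : N ≤ P) (M : AddSubgroup R) : M * N ≤ M * P :=
  AddSubmonoid.mul_le_mul_right (M := M.toAddSubmonoid) h

protected theorem mul_assoc {R : Type*} [NonUnitalRing R] (M N P : AddSubgroup R) :
    M * N * P = M * (N * P) :=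
  toAddSubmonoid_injective (_root_.mul_assoc M.toAddSubmonoid N.toAddSubmonoid P.toAddSubmonoid)

end AddSubgroup

namespace CatGradedRing

theorem deg_id_mul {Obj : Type*} [Category Obj] {R : Type*} [NonUnitalRing R]
    (g : CatGradedRing Obj R) {e f : Obj} (s : e ⟶ f) : g.deg (𝟙 f) * g.deg s = g.deg s :=
  le_antisymm (by simpa using g.mul_le (𝟙 f) s) fun r hr =>
    g.unit_mul s r hr ▸ AddSubgroup.mul_mem_mul (g.unit_mem f) hr

end CatGradedRing

/-- If `s` is an isomorphism, then `R_s R_{s⁻¹} = R_{c(s)}` iff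
`R_s R_t = R_{st}` for all `t` with `d(s) = c(t)`. -/
theorem catGradedRing_iso_strong_iff {Obj : Type*} [Category Obj] {R : Type*} [NonUnitalRing R]
    (g : CatGradedRing Obj R) {e f : Obj} (s : e ⟶ f) [IsIso s] :
    g.deg s * g.deg (inv s) = g.deg (𝟙 f) ↔
      ∀ (x : Obj) (t : x ⟶ e), g.deg s * g.deg t = g.deg (t ≫ s) := by
  constructor
  · intro h x t
    refine le_antisymm (g.mul_le s t) ?_
    calc g.deg (t ≫ s) = g.deg s * g.deg (inv s) * g.deg (t ≫ s) := by rw [h, g.deg_id_mul]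
      _ = g.deg s * (g.deg (inv s) * g.deg (t ≫ s)) := AddSubgroup.mul_assoc _ _ _
      _ ≤ g.deg s * g.deg ((t ≫ s) ≫ inv s) :=
        AddSubgroup.mul_le_mul_right (g.mul_le (inv s) (t ≫ s)) _
      _ = g.deg s * g.deg t := by simp
  · intro h
    simpa using h f (inv s)
end

section
/- Let R be a locally unital ring strongly graded by a groupoid G. For each s in G there is a unique ring isomorphism σ_s : Z(R_{d(s)}) → Z(R_{c(s)}) satisfying σ_s(x) r_s = r_s x for all x in Z(R_{d(s)}) and r_s in R_s, and s ↦ σ_s is functorial: σ_e = id and σ_{st} = σ_s ∘ σ_t for composable s, t. -/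
open Pointwise CategoryTheory

/-- The center `Z(R_e)` of the identity component `R_e`. -/
def CatGradedRing.center {Obj : Type*} [Category Obj] {R : Type*} [NonUnitalRing R]
    (g : CatGradedRing Obj R) (e : Obj) : Set R :=
  {r : R | r ∈ g.deg (𝟙 e) ∧ ∀ a ∈ g.deg (𝟙 e), a * r = r * a}

/-- `σs` is a ring isomorphism `Z(R_{d(s)}) → Z(R_{c(s)})` with `σs(x) r = r x` for `r ∈ R_s`. -/
def CatGradedRing.IsCenterSigma {Obj : Type*} [Category Obj] {R : Type*} [NonUnitalRing R]
    (g : CatGradedRing Obj R) {e f : Obj} (s : e ⟶ f) (σs : R → R) : Prop :=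
  Set.BijOn σs (g.center e) (g.center f) ∧
  (∀ x ∈ g.center e, ∀ y ∈ g.center e, σs (x + y) = σs x + σs y) ∧
  (∀ x ∈ g.center e, ∀ y ∈ g.center e, σs (x * y) = σs x * σs y) ∧
  σs (g.unit e) = g.unit f ∧
  ∀ x ∈ g.center e, ∀ r ∈ g.deg s, σs x * r = r * x

/-!
Since `R_s R_{s⁻¹} = R_{c(s)}`, the local unit decomposes as `1_{c(s)} = ∑ aᵢ bᵢ` with
`aᵢ ∈ R_s`, `bᵢ ∈ R_{s⁻¹}`, and `σ_s(x) = ∑ aᵢ x bᵢ` works: `bᵢ r ∈ R_{d(s)}` commutes with `x`.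
The same decomposition shows that an element of `R_{c(s)}` is determined by its products with
`R_s`, which gives uniqueness; every remaining property of `σ` (centrality, additivity,
multiplicativity, functoriality) is then checked by verifying the defining identity. Bijectivity
follows from functoriality, `σ_{s⁻¹}` being the inverse of `σ_s`.
-/

namespace CatGradedRing

section Category

variable {Obj : Type*} [Category Obj] {R : Type*} [NonUnitalRing R] (g : CatGradedRing Obj R)

lemma mul_mem_deg_of_comp_eq {e f h : Obj} {s : f ⟶ h} {t : e ⟶ f} {u : e ⟶ h}
    (hu : t ≫ s = u) {a b : R} (ha : a ∈ g.deg s) (hb : b ∈ g.deg t) : a * b ∈ g.deg u :=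
  hu ▸ g.mul_le s t (AddSubmonoid.mul_mem_mul ha hb)

lemma unit_mem_center (e : Obj) : g.unit e ∈ g.center e :=
  ⟨g.unit_mem e, fun a ha => by rw [g.mul_unit (𝟙 e) a ha, g.unit_mul (𝟙 e) a ha]⟩

variable {g}

lemma add_mem_center {e : Obj} {x y : R} (hx : x ∈ g.center e) (hy : y ∈ g.center e) :
    x + y ∈ g.center e :=
  ⟨add_mem hx.1 hy.1, fun a ha => by rw [mul_add, add_mul, hx.2 a ha, hy.2 a ha]⟩

lemma mul_mem_center {e : Obj} {x y : R} (hx : x ∈ g.center e) (hy : y ∈ g.center e) :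
    x * y ∈ g.center e := by
  refine ⟨g.mul_mem_deg_of_comp_eq (Category.id_comp _) hx.1 hy.1, fun a ha => ?_⟩
  calc a * (x * y) = x * a * y := by rw [← mul_assoc, hx.2 a ha]
    _ = x * y * a := by rw [mul_assoc, hy.2 a ha, mul_assoc]

variable (g)

def Intertwines {e f : Obj} (s : e ⟶ f) (x z : R) : Prop :=
  z ∈ g.deg (𝟙 f) ∧ ∀ r ∈ g.deg s, z * r = r * x

open Classical in
noncomputable def sigma {e f : Obj} (s : e ⟶ f) (x : R) : R :=
  if h : ∃ z, g.Intertwines s x z then h.choose else 0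

end Category

section Groupoid

variable {Obj : Type*} [Groupoid Obj] {R : Type*} [NonUnitalRing R] {g : CatGradedRing Obj R}

lemma unit_mem_deg_mul_deg_inv (hstr : g.IsStrong) {e f : Obj} (s : e ⟶ f) :
    g.unit f ∈ g.deg s * g.deg (Groupoid.inv s) := by
  rw [hstr, Groupoid.inv_comp]
  exact g.unit_mem f

lemma eq_of_forall_mul_eq (hstr : g.IsStrong) {e f : Obj} (s : e ⟶ f) {z z' : R}
    (hz : z ∈ g.deg (𝟙 f)) (hz' : z' ∈ g.deg (𝟙 f)) (h : ∀ r ∈ g.deg s, z * r = z' * r) :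
    z = z' := by
  have hprod : ∀ a ∈ g.deg s * g.deg (Groupoid.inv s), z * a = z' * a := fun a ha =>
    AddSubmonoid.mul_induction_on ha (fun r hr c _ => by rw [← mul_assoc, ← mul_assoc, h r hr])
      (fun p q hp hq => by rw [mul_add, mul_add, hp, hq])
  calc z = z * g.unit f := (g.mul_unit _ z hz).symm
    _ = z' * g.unit f := hprod _ (unit_mem_deg_mul_deg_inv hstr s)
    _ = z' := g.mul_unit _ z' hz'

lemma Intertwines.unique (hstr : g.IsStrong) {e f : Obj} {s : e ⟶ f} {x z z' : R}
    (hz : g.Intertwines s x z) (hz' : g.Intertwines s x z') : z = z' :=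
  eq_of_forall_mul_eq hstr s hz.1 hz'.1 fun r hr => by rw [hz.2 r hr, hz'.2 r hr]

lemma exists_intertwines (hstr : g.IsStrong) {e f : Obj} (s : e ⟶ f) {x : R}
    (hx : x ∈ g.center e) : ∃ z, g.Intertwines s x z := by
  have key : ∀ u ∈ g.deg s * g.deg (Groupoid.inv s),
      ∃ z ∈ g.deg (𝟙 f), ∀ r ∈ g.deg s, z * r = u * (r * x) := by
    intro u hu
    refine AddSubmonoid.mul_induction_on hu (fun a ha b hb => ?_) ?_
    · have hax : a * x ∈ g.deg s := g.mul_mem_deg_of_comp_eq (Category.id_comp s) ha hx.1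
      refine ⟨a * x * b, g.mul_mem_deg_of_comp_eq (Groupoid.inv_comp s) hax hb, fun r hr => ?_⟩
      have hbr : b * r ∈ g.deg (𝟙 e) := g.mul_mem_deg_of_comp_eq (Groupoid.comp_inv s) hb hr
      calc a * x * b * r = a * (x * (b * r)) := by simp only [mul_assoc]
        _ = a * b * (r * x) := by rw [← hx.2 _ hbr]; simp only [mul_assoc]
    · rintro p q ⟨z, hz, hzr⟩ ⟨z', hz', hz'r⟩
      exact ⟨z + z', add_mem hz hz', fun r hr => by rw [add_mul, hzr r hr, hz'r r hr, add_mul]⟩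
  obtain ⟨z, hz, hzr⟩ := key _ (unit_mem_deg_mul_deg_inv hstr s)
  refine ⟨z, hz, fun r hr => ?_⟩
  rw [hzr r hr, g.unit_mul s _ (g.mul_mem_deg_of_comp_eq (Category.id_comp s) hr hx.1)]

lemma intertwines_sigma (hstr : g.IsStrong) {e f : Obj} (s : e ⟶ f) {x : R}
    (hx : x ∈ g.center e) : g.Intertwines s x (g.sigma s x) := by
  have h := exists_intertwines hstr s hx
  rw [sigma, dif_pos h]
  exact h.choose_spec

lemma sigma_eq_of_intertwines (hstr : g.IsStrong) {e f : Obj} {s : e ⟶ f} {x z : R}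
    (hx : x ∈ g.center e) (hz : g.Intertwines s x z) : g.sigma s x = z :=
  (intertwines_sigma hstr s hx).unique hstr hz

lemma sigma_mul_of_mem_deg (hstr : g.IsStrong) {e f : Obj} {s : e ⟶ f} {x : R}
    (hx : x ∈ g.center e) {r : R} (hr : r ∈ g.deg s) : g.sigma s x * r = r * x :=
  (intertwines_sigma hstr s hx).2 r hr

lemma sigma_mem_center (hstr : g.IsStrong) {e f : Obj} (s : e ⟶ f) {x : R}
    (hx : x ∈ g.center e) : g.sigma s x ∈ g.center f := by
  obtain ⟨hz, hzr⟩ := intertwines_sigma hstr s hx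
  refine ⟨hz, fun a ha => eq_of_forall_mul_eq hstr s
    (g.mul_mem_deg_of_comp_eq (Category.id_comp _) ha hz)
    (g.mul_mem_deg_of_comp_eq (Category.id_comp _) hz ha) fun r hr => ?_⟩
  have har : a * r ∈ g.deg s := g.mul_mem_deg_of_comp_eq (Category.comp_id s) ha hr
  rw [mul_assoc, hzr r hr, mul_assoc, hzr _ har, mul_assoc]

lemma sigma_add (hstr : g.IsStrong) {e f : Obj} (s : e ⟶ f) {x y : R}
    (hx : x ∈ g.center e) (hy : y ∈ g.center e) :
    g.sigma s (x + y) = g.sigma s x + g.sigma s y := by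
  refine sigma_eq_of_intertwines hstr (add_mem_center hx hy)
    ⟨add_mem (sigma_mem_center hstr s hx).1 (sigma_mem_center hstr s hy).1, fun r hr => ?_⟩
  rw [add_mul, sigma_mul_of_mem_deg hstr hx hr, sigma_mul_of_mem_deg hstr hy hr, mul_add]

lemma sigma_mul (hstr : g.IsStrong) {e f : Obj} (s : e ⟶ f) {x y : R}
    (hx : x ∈ g.center e) (hy : y ∈ g.center e) :
    g.sigma s (x * y) = g.sigma s x * g.sigma s y := by
  refine sigma_eq_of_intertwines hstr (mul_mem_center hx hy)
    ⟨(mul_mem_center (sigma_mem_center hstr s hx) (sigma_mem_center hstr s hy)).1,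
      fun r hr => ?_⟩
  have hry : r * y ∈ g.deg s := g.mul_mem_deg_of_comp_eq (Category.id_comp s) hr hy.1
  rw [mul_assoc, sigma_mul_of_mem_deg hstr hy hr, sigma_mul_of_mem_deg hstr hx hry, mul_assoc,
    hx.2 y hy.1]

lemma sigma_unit (hstr : g.IsStrong) {e f : Obj} (s : e ⟶ f) :
    g.sigma s (g.unit e) = g.unit f :=
  sigma_eq_of_intertwines hstr (g.unit_mem_center e)
    ⟨g.unit_mem f, fun r hr => by rw [g.unit_mul s r hr, g.mul_unit s r hr]⟩

lemma sigma_id (hstr : g.IsStrong) {e : Obj} {x : R} (hx : x ∈ g.center e) :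
    g.sigma (𝟙 e) x = x :=
  sigma_eq_of_intertwines hstr hx ⟨hx.1, fun r hr => (hx.2 r hr).symm⟩

lemma sigma_comp (hstr : g.IsStrong) {e f h : Obj} (s : f ⟶ h) (t : e ⟶ f) {x : R}
    (hx : x ∈ g.center e) : g.sigma (t ≫ s) x = g.sigma s (g.sigma t x) := by
  have htx := sigma_mem_center hstr t hx
  refine sigma_eq_of_intertwines hstr hx ⟨(sigma_mem_center hstr s htx).1, fun r hr => ?_⟩
  rw [← hstr] at hr
  refine AddSubmonoid.mul_induction_on hr (fun u hu v hv => ?_)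
    (fun p q hp hq => by rw [mul_add, hp, hq, add_mul])
  rw [← mul_assoc, sigma_mul_of_mem_deg hstr htx hu, mul_assoc, sigma_mul_of_mem_deg hstr hx hv,
    mul_assoc]

lemma sigma_inv_sigma (hstr : g.IsStrong) {e f : Obj} (s : e ⟶ f) {x : R}
    (hx : x ∈ g.center e) : g.sigma (Groupoid.inv s) (g.sigma s x) = x := by
  rw [← sigma_comp hstr _ _ hx, Groupoid.comp_inv, sigma_id hstr hx]

lemma bijOn_sigma (hstr : g.IsStrong) {e f : Obj} (s : e ⟶ f) :
    Set.BijOn (g.sigma s) (g.center e) (g.center f) := by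
  refine Set.InvOn.bijOn (f' := g.sigma (Groupoid.inv s))
    ⟨fun x hx => sigma_inv_sigma hstr s hx, fun y hy => ?_⟩
    (fun x => sigma_mem_center hstr s) (fun y => sigma_mem_center hstr _)
  simpa using sigma_inv_sigma hstr (Groupoid.inv s) hy

lemma isCenterSigma_sigma (hstr : g.IsStrong) {e f : Obj} (s : e ⟶ f) :
    g.IsCenterSigma s (g.sigma s) :=
  ⟨bijOn_sigma hstr s, fun _ hx _ hy => sigma_add hstr s hx hy,
    fun _ hx _ hy => sigma_mul hstr s hx hy, sigma_unit hstr s,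
    fun _ hx _ hr => sigma_mul_of_mem_deg hstr hx hr⟩

lemma IsCenterSigma.eqOn_sigma (hstr : g.IsStrong) {e f : Obj} {s : e ⟶ f} {σ' : R → R}
    (hσ' : g.IsCenterSigma s σ') : Set.EqOn σ' (g.sigma s) (g.center e) := fun x hx =>
  (sigma_eq_of_intertwines hstr hx ⟨(hσ'.1.mapsTo hx).1, hσ'.2.2.2.2 x hx⟩).symm

end Groupoid

end CatGradedRing

/-- For a locally unital ring strongly graded by a groupoid `G`, there are
unique ring isomorphisms `σ_s : Z(R_{d(s)}) → Z(R_{c(s)})` with `σ_s(x) r_s = r_s x`, and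
they are functorial: `σ_{𝟙 e} = id` and `σ_{st} = σ_s ∘ σ_t`. -/
theorem catGradedRing_center_sigma_functor {Obj : Type*} [Groupoid Obj]
    {R : Type*} [NonUnitalRing R] (g : CatGradedRing Obj R) (hstr : g.IsStrong) :
    ∃ σ : ∀ (e f : Obj), (e ⟶ f) → R → R,
      (∀ (e f : Obj) (s : e ⟶ f), g.IsCenterSigma s (σ e f s)) ∧
      (∀ (e f : Obj) (s : e ⟶ f) (σ' : R → R), g.IsCenterSigma s σ' →
        Set.EqOn σ' (σ e f s) (g.center e)) ∧
      (∀ e : Obj, Set.EqOn (σ e e (𝟙 e)) id (g.center e)) ∧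
      (∀ (e f h : Obj) (s : f ⟶ h) (t : e ⟶ f),
        Set.EqOn (σ e h (t ≫ s)) (σ f h s ∘ σ e f t) (g.center e)) :=
  ⟨fun _ _ s => g.sigma s,
    fun _ _ s => g.isCenterSigma_sigma hstr s,
    fun _ _ _ _ hσ' => hσ'.eqOn_sigma hstr,
    fun _ _ hx => g.sigma_id hstr hx,
    fun _ _ _ s t _ hx => g.sigma_comp hstr s t hx⟩
end

section
/- Let K be a nontrivial commutative unital ring and G a finite groupoid, with morphism list s_1,…,s_n exhausting all of mor(G) (possibly with repetitions) such that {s_1,…,s_n} = mor(G). Define R_s ⊆ M_n(K) as the K-span of e_{ij} with s_i s = s_j, and R = Σ_{s∈G} R_s. Then R is a unital strongly G-graded ring with R_s ≠ 0 for all s ∈ G, and the sum R = ⊕_{s∈G} R_s is direct. -/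
/-!
Write `X_t = {(i, j) : s_i t = s_j}`, so that `R_t` is spanned by the matrix units indexed by
`X_t`. Since `e_ij e_kl = δ_jk e_il`, the product `R_a R_b` is spanned by the units indexed by the
relational composite of `X_a` and `X_b`. When `ab` is defined this composite is `X_ab`
(associativity gives one inclusion; the other factors `s_i (ab)` through `s_i a`, which occurs
in the list because `s` is surjective), and otherwise it is empty. Cancellation in the groupoid
makes the `X_t` pairwise disjoint, so linear independence of the matrix units makes the sum
direct, and `1 = ∑ e_ii` lies in `R` because `(i, i) ∈ X_{id}`.
-/

open Pointwise CategoryTheory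

/-- `SComp a b c` : the morphisms `a` and `b` (as objects of the total morphism type) are
composable in the sense `d(a) = c(b)`, and `c = ab` is their composite. -/
def SComp {Obj : Type*} [Category Obj] (a b c : Σ e f : Obj, e ⟶ f) : Prop :=
  ∃ h : b.2.1 = a.1, c = ⟨b.1, a.2.1, (b.2.2 ≫ eqToHom h) ≫ a.2.2⟩

/-- The homogeneous component `R_t ⊆ M_n(K)`: the `K`-span of the matrix units `e_{ij}`
with `s_i t = s_j`. -/
def matDeg {Obj : Type*} [Category Obj] (K : Type*) [CommRing K] {n : ℕ}
    (s : Fin n → Σ e f : Obj, e ⟶ f) (t : Σ e f : Obj, e ⟶ f) :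
    Submodule K (Matrix (Fin n) (Fin n) K) :=
  Submodule.span K
    {M | ∃ i j : Fin n, SComp (s i) t (s j) ∧ M = Matrix.single i j (1 : K)}

open Function

namespace SComp

variable {Obj : Type*} [Category Obj] {a b c x y z : Σ e f : Obj, e ⟶ f}

lemma id_right (t : Σ e f : Obj, e ⟶ f) : SComp t ⟨t.1, t.1, 𝟙 t.1⟩ t := by
  obtain ⟨e, f, φ⟩ := t
  exact ⟨rfl, by simp⟩

lemma id_left (t : Σ e f : Obj, e ⟶ f) : SComp ⟨t.2.1, t.2.1, 𝟙 t.2.1⟩ t t := by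
  obtain ⟨e, f, φ⟩ := t
  exact ⟨rfl, by simp⟩

lemma exists_of_comp (hxa : SComp x a y) (hyb : SComp y b z) : ∃ c, SComp a b c := by
  obtain ⟨ha, rfl⟩ := hxa
  obtain ⟨hb, rfl⟩ := hyb
  exact ⟨_, hb, rfl⟩

lemma assoc (hxa : SComp x a y) (hyb : SComp y b z) (habc : SComp a b c) : SComp x c z := by
  obtain ⟨x1, x2, f⟩ := x
  obtain ⟨a1, a2, g⟩ := a
  obtain ⟨b1, b2, h⟩ := b
  obtain ⟨ha, rfl⟩ := hxa
  obtain ⟨hb, rfl⟩ := hyb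
  obtain ⟨-, rfl⟩ := habc
  dsimp only at ha hb
  subst ha hb
  exact ⟨rfl, by simp⟩

lemma factor (hxc : SComp x c z) (habc : SComp a b c) : ∃ y, SComp x a y ∧ SComp y b z := by
  obtain ⟨x1, x2, f⟩ := x
  obtain ⟨a1, a2, g⟩ := a
  obtain ⟨b1, b2, h⟩ := b
  obtain ⟨hb, rfl⟩ := habc
  obtain ⟨ha, rfl⟩ := hxc
  dsimp only at ha hb
  subst ha hb
  exact ⟨_, ⟨rfl, rfl⟩, ⟨rfl, by simp⟩⟩

end SComp

lemma SComp.cancel_left {Obj : Type*} [Groupoid Obj] {x t t' y : Σ e f : Obj, e ⟶ f}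
    (h : SComp x t y) (h' : SComp x t' y) : t = t' := by
  obtain ⟨x1, x2, f⟩ := x
  obtain ⟨t1, t2, g⟩ := t
  obtain ⟨t1', t2', g'⟩ := t'
  obtain ⟨ht, rfl⟩ := h
  obtain ⟨ht', hy⟩ := h'
  dsimp only at ht ht'
  subst ht ht'
  simp only [eqToHom_refl, Category.comp_id, Sigma.mk.injEq] at hy
  obtain ⟨rfl, hg⟩ := hy
  rw [heq_iff_eq, Sigma.mk.injEq, heq_iff_eq, cancel_mono] at hg
  rw [hg.2]

theorem LinearIndependent.iSupIndep_span_image {ι κ R M : Type*} [Semiring R] [AddCommMonoid M]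
    [Module R M] {v : ι → M} (hv : LinearIndependent R v) {X : κ → Set ι}
    (hX : Pairwise (Disjoint on X)) : iSupIndep fun k => Submodule.span R (v '' X k) := by
  intro k
  have hdisj : Disjoint (X k) (⋃ (j : κ) (_ : j ≠ k), X j) :=
    Set.disjoint_iUnion₂_right.2 fun j hj => hX hj.symm
  simpa only [Set.image_iUnion, Submodule.span_iUnion] using hv.disjoint_span_image hdisj

section MatrixUnitSpan

open Matrix

variable (K : Type*) [CommSemiring K] {m n : Type*} [DecidableEq m] [DecidableEq n]

def matrixUnitSpan (X : Set (m × n)) : Submodule K (Matrix m n K) :=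
  Submodule.span K ((fun p => single p.1 p.2 1) '' X)

variable {K}

lemma single_mem_matrixUnitSpan {X : Set (m × n)} {i : m} {j : n} (h : (i, j) ∈ X) :
    single i j (1 : K) ∈ matrixUnitSpan K X :=
  Submodule.subset_span ⟨(i, j), h, rfl⟩

lemma matrixUnitSpan_empty : matrixUnitSpan K (∅ : Set (m × n)) = ⊥ := by
  simp [matrixUnitSpan]

lemma matrixUnitSpan_ne_bot [Nontrivial K] {X : Set (m × n)} (hX : X.Nonempty) :
    matrixUnitSpan K X ≠ ⊥ := by
  obtain ⟨⟨i, j⟩, hij⟩ := hX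
  exact Submodule.ne_bot_iff _ |>.2
    ⟨_, single_mem_matrixUnitSpan hij, fun h => by simpa using congr_fun₂ h i j⟩

lemma iSupIndep_matrixUnitSpan [Fintype m] [Finite n] {ι : Type*} {X : ι → Set (m × n)}
    (hX : Pairwise (Disjoint on X)) : iSupIndep fun k => matrixUnitSpan K (X k) := by
  have hbasis : ⇑(stdBasis K m n) = fun p => single p.1 p.2 1 :=
    funext fun p => stdBasis_eq_single K p.1 p.2
  have h := (stdBasis K m n).linearIndependent.iSupIndep_span_image hX
  rwa [hbasis] at h

lemma matrixUnitSpan_mul_matrixUnitSpan [Fintype m] (X Y : Set (m × m)) :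
    matrixUnitSpan K X * matrixUnitSpan K Y =
      matrixUnitSpan K {p | ∃ j, (p.1, j) ∈ X ∧ (j, p.2) ∈ Y} := by
  rw [matrixUnitSpan, matrixUnitSpan, Submodule.span_mul_span]
  apply le_antisymm
  · rw [Submodule.span_le]
    rintro _ ⟨_, ⟨⟨i, j⟩, hij, rfl⟩, _, ⟨⟨k, l⟩, hkl, rfl⟩, rfl⟩
    dsimp only
    obtain rfl | hjk := eq_or_ne j k
    · rw [single_mul_single_same, one_mul]
      exact single_mem_matrixUnitSpan ⟨j, hij, hkl⟩
    · rw [single_mul_single_of_ne (h := hjk)]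
      exact zero_mem _
  · rw [matrixUnitSpan, Submodule.span_le]
    rintro _ ⟨⟨i, l⟩, ⟨j, hij, hjl⟩, rfl⟩
    exact Submodule.subset_span
      ⟨_, ⟨(i, j), hij, rfl⟩, _, ⟨(j, l), hjl, rfl⟩, by simp⟩

end MatrixUnitSpan

section matDeg

variable {Obj : Type*} [Category Obj] (K : Type*) [CommRing K] {n : ℕ}
  (s : Fin n → Σ e f : Obj, e ⟶ f)

lemma matDeg_eq_matrixUnitSpan (t : Σ e f : Obj, e ⟶ f) :
    matDeg K s t = matrixUnitSpan K {p | SComp (s p.1) t (s p.2)} := by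
  rw [matDeg, matrixUnitSpan]
  congr 1
  ext M
  simp [eq_comm]

variable {K s}

lemma matDeg_mul_matDeg_of_sComp (hs : Surjective s) {a b c : Σ e f : Obj, e ⟶ f}
    (habc : SComp a b c) : matDeg K s a * matDeg K s b = matDeg K s c := by
  simp only [matDeg_eq_matrixUnitSpan, matrixUnitSpan_mul_matrixUnitSpan]
  congr 1
  ext ⟨i, l⟩
  constructor
  · rintro ⟨j, hij, hjl⟩
    exact hij.assoc hjl habc
  · intro hil
    obtain ⟨y, hiy, hyl⟩ := hil.factor habc
    obtain ⟨j, rfl⟩ := hs y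
    exact ⟨j, hiy, hyl⟩

lemma matDeg_mul_matDeg_of_not_exists_sComp {a b : Σ e f : Obj, e ⟶ f}
    (hab : ¬∃ c, SComp a b c) : matDeg K s a * matDeg K s b = ⊥ := by
  simp only [matDeg_eq_matrixUnitSpan, matrixUnitSpan_mul_matrixUnitSpan]
  rw [← matrixUnitSpan_empty (K := K)]
  congr 1
  refine Set.eq_empty_iff_forall_notMem.2 ?_
  rintro p ⟨j, hpj, hjp⟩
  exact hab (hpj.exists_of_comp hjp)

lemma matDeg_ne_bot [Nontrivial K] (hs : Surjective s) (t : Σ e f : Obj, e ⟶ f) :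
    matDeg K s t ≠ ⊥ := by
  obtain ⟨i, hi⟩ := hs ⟨t.2.1, t.2.1, 𝟙 t.2.1⟩
  obtain ⟨j, hj⟩ := hs t
  rw [matDeg_eq_matrixUnitSpan]
  have hij : SComp (s i) t (s j) := hi ▸ hj ▸ SComp.id_left t
  exact matrixUnitSpan_ne_bot ⟨(i, j), hij⟩

variable (K s)

lemma one_mem_iSup_matDeg : (1 : Matrix (Fin n) (Fin n) K) ∈ ⨆ t, matDeg K s t := by
  rw [← Matrix.sum_single_one]
  refine Submodule.sum_mem _ fun i _ => Submodule.mem_iSup_of_mem ⟨(s i).1, (s i).1, 𝟙 _⟩ ?_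
  rw [matDeg_eq_matrixUnitSpan]
  exact single_mem_matrixUnitSpan (SComp.id_right (s i))

end matDeg

lemma iSupIndep_matDeg {Obj : Type*} [Groupoid Obj] (K : Type*) [CommRing K] {n : ℕ}
    (s : Fin n → Σ e f : Obj, e ⟶ f) : iSupIndep (matDeg K s) := by
  rw [funext (matDeg_eq_matrixUnitSpan K s)]
  exact iSupIndep_matrixUnitSpan fun t t' htt' =>
    Set.disjoint_left.2 fun _ ht ht' => htt' (ht.cancel_left ht')

theorem matDeg_strongly_graded_groupoid_general {Obj : Type*} [Groupoid Obj]
    (K : Type*) [CommRing K] [Nontrivial K]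
    {n : ℕ} (s : Fin n → Σ e f : Obj, e ⟶ f)
    (hsurj : Function.Surjective s) :
    -- every component is nonzero
    (∀ t : Σ e f : Obj, e ⟶ f, matDeg K s t ≠ ⊥) ∧
    -- strongly graded
    (∀ a b c : Σ e f : Obj, e ⟶ f, SComp a b c →
      matDeg K s a * matDeg K s b = matDeg K s c) ∧
    -- `R_a R_b = 0` for non-composable pairs
    (∀ a b : Σ e f : Obj, e ⟶ f, (¬∃ c, SComp a b c) →
      matDeg K s a * matDeg K s b = ⊥) ∧
    -- the sum `R = ⊕_t R_t` is direct
    iSupIndep (fun t : Σ e f : Obj, e ⟶ f => matDeg K s t) ∧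
    -- `R` is unital
    (∃ u ∈ ⨆ t : Σ e f : Obj, e ⟶ f, matDeg K s t,
      ∀ r ∈ ⨆ t : Σ e f : Obj, e ⟶ f, matDeg K s t, u * r = r ∧ r * u = r) :=
  ⟨matDeg_ne_bot hsurj, fun _ _ _ => matDeg_mul_matDeg_of_sComp hsurj,
    fun _ _ => matDeg_mul_matDeg_of_not_exists_sComp, iSupIndep_matDeg K s,
    1, one_mem_iSup_matDeg K s, fun r _ => ⟨one_mul r, mul_one r⟩⟩

/-- If `G` is a finite groupoid and `s_1, …, s_n` lists all morphisms of
`G` (possibly with repetitions), then `R = ∑_{t} R_t ⊆ M_n(K)` is a unital strongly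
`G`-graded ring with all components nonzero, and the sum of the components is direct. -/
theorem matDeg_strongly_graded_groupoid {Obj : Type*} [Groupoid Obj]
    [Finite (Σ e f : Obj, e ⟶ f)]
    (K : Type*) [CommRing K] [Nontrivial K]
    {n : ℕ} (s : Fin n → Σ e f : Obj, e ⟶ f)
    (hsurj : Function.Surjective s) :
    -- every component is nonzero
    (∀ t : Σ e f : Obj, e ⟶ f, matDeg K s t ≠ ⊥) ∧
    -- strongly graded
    (∀ a b c : Σ e f : Obj, e ⟶ f, SComp a b c →
      matDeg K s a * matDeg K s b = matDeg K s c) ∧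
    -- `R_a R_b = 0` for non-composable pairs
    (∀ a b : Σ e f : Obj, e ⟶ f, (¬∃ c, SComp a b c) →
      matDeg K s a * matDeg K s b = ⊥) ∧
    -- the sum `R = ⊕_t R_t` is direct
    iSupIndep (fun t : Σ e f : Obj, e ⟶ f => matDeg K s t) ∧
    -- `R` is unital
    (∃ u ∈ ⨆ t : Σ e f : Obj, e ⟶ f, matDeg K s t,
      ∀ r ∈ ⨆ t : Σ e f : Obj, e ⟶ f, matDeg K s t, u * r = r ∧ r * u = r) :=
  matDeg_strongly_graded_groupoid_general K s hsurj
end
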